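/- The terms Ω and Sk.Ω are NOT contextually equivalent under the relaxed semantics of λS: Ω diverges while Sk.Ω is already a stuck normal form, hence Ω ≄ Sk.Ω; combined with Ω ≃_p Sk.Ω this shows the inclusion ≃ ⊆ ≃_p is strict. -/

import Mathlib

/-- Terms of the calculus λS: variables, abstractions, applications,
    shift (Sk.t) and reset (⟨t⟩). -/
inductive Tm : Type
  | var : ℕ → Tm
  | lam : ℕ → Tm → Tm
  | app : Tm → Tm → Tm
  | shift : ℕ → Tm → Tm
  | reset : Tm → Tm
deriving DecidableEq

namespace Tm

/-- Values are λ-abstractions. -/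
def IsValue : Tm → Prop
  | lam _ _ => True
  | _ => False

/-- Free variables. -/
def fv : Tm → Finset ℕ
  | var x => {x}
  | lam x t => fv t \ {x}
  | app a b => fv a ∪ fv b
  | shift k t => fv t \ {k}
  | reset t => fv t

def Closed (t : Tm) : Prop := fv t = ∅

/-- Substitution t{v/x} (substituted terms are closed values, so no
    capture can occur). -/
def subst : Tm → ℕ → Tm → Tm
  | var y, x, v => if y = x then v else var y
  | lam y t, x, v => if y = x then lam y t else lam y (subst t x v)
  | app a b, x, v => app (subst a x v) (subst b x v)
  | shift k t, x, v => if k = x then shift k t else shift k (subst t x v)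
  | reset t, x, v => reset (subst t x v)

end Tm

/-- (Evaluation) contexts F ::= [] | v F | F t | ⟨F⟩, represented outside-in.
    Pure contexts E are those with no reset constructor. -/
inductive Ctx : Type
  | hole : Ctx
  | appR : Tm → Ctx → Ctx   -- v F
  | appL : Ctx → Tm → Ctx   -- F t
  | reset : Ctx → Ctx       -- ⟨F⟩
deriving DecidableEq

namespace Ctx

def plug : Ctx → Tm → Tm
  | hole, t => t
  | appR v F, t => Tm.app v (F.plug t)
  | appL F u, t => Tm.app (F.plug t) u
  | reset F, t => Tm.reset (F.plug t)

/-- Well-formedness: in `v F` the term v must be a value. -/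
def Wf : Ctx → Prop
  | hole => True
  | appR v F => v.IsValue ∧ F.Wf
  | appL F _ => F.Wf
  | reset F => F.Wf

/-- Pure contexts contain no reset around the hole. -/
def Pure : Ctx → Prop
  | hole => True
  | appR _ F => F.Pure
  | appL F _ => F.Pure
  | reset _ => False

def fv : Ctx → Finset ℕ
  | hole => ∅
  | appR v F => v.fv ∪ F.fv
  | appL F u => F.fv ∪ u.fv
  | reset F => F.fv

/-- Context composition: (F.comp G)[t] = F[G[t]]. -/
def comp : Ctx → Ctx → Ctx
  | hole, G => G
  | appR v F, G => appR v (F.comp G)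
  | appL F u, G => appL (F.comp G) u
  | reset F, G => reset (F.comp G)

end Ctx

/-- A canonical fresh variable not occurring in the finite set s. -/
def fresh (s : Finset ℕ) : ℕ := s.sup id + 1

/-- The reduction relation →v of λS. -/
inductive Red : Tm → Tm → Prop
  | beta (F : Ctx) (x : ℕ) (t v : Tm) :
      F.Wf → v.IsValue →
      Red (F.plug (Tm.app (Tm.lam x t) v)) (F.plug (t.subst x v))
  | shift (F E : Ctx) (k : ℕ) (t : Tm) :
      F.Wf → E.Wf → E.Pure →
      Red (F.plug (Tm.reset (E.plug (Tm.shift k t))))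
          (F.plug (Tm.reset (t.subst k
            (Tm.lam (fresh E.fv) (Tm.reset (E.plug (Tm.var (fresh E.fv))))))))
  | reset (F : Ctx) (v : Tm) :
      F.Wf → v.IsValue →
      Red (F.plug (Tm.reset v)) (F.plug v)

/-- A term is stuck if it is not a value and admits no reduction step. -/
def Stuck (t : Tm) : Prop := ¬ t.IsValue ∧ ∀ t', ¬ Red t t'

/-- A normal form is a value or a stuck term. -/
def NormalForm (t : Tm) : Prop := t.IsValue ∨ Stuck t

/-- Reflexive-transitive closure of reduction. -/
def Steps : Tm → Tm → Prop := Relation.ReflTransGen Red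

/-- Evaluation: t ⇓ t' when t →v* t' and t' is irreducible. -/
def Evals (t t' : Tm) : Prop := Steps t t' ∧ ∀ u, ¬ Red t' u

/-- Redexes: (λx.t) v, ⟨E[Sk.t]⟩ with E pure, and ⟨v⟩. -/
def IsRedex (r : Tm) : Prop :=
  (∃ x t v, Tm.IsValue v ∧ r = Tm.app (Tm.lam x t) v) ∨
  (∃ E : Ctx, ∃ k t, E.Wf ∧ E.Pure ∧ r = Tm.reset (E.plug (Tm.shift k t))) ∨
  (∃ v, Tm.IsValue v ∧ r = Tm.reset v)

/-- Divergence: an infinite reduction sequence. -/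
def Diverges (t : Tm) : Prop := ∃ f : ℕ → Tm, f 0 = t ∧ ∀ n, Red (f n) (f (n + 1))

/-- Ω = (λx.x x)(λx.x x). -/
def Omega : Tm :=
  Tm.app (Tm.lam 0 (Tm.app (Tm.var 0) (Tm.var 0)))
         (Tm.lam 0 (Tm.app (Tm.var 0) (Tm.var 0)))

/-- Arbitrary one-hole contexts C. -/
inductive GCtx : Type
  | hole : GCtx
  | lam : ℕ → GCtx → GCtx
  | appL : GCtx → Tm → GCtx
  | appR : Tm → GCtx → GCtx
  | shift : ℕ → GCtx → GCtx
  | reset : GCtx → GCtx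

def GCtx.plug : GCtx → Tm → Tm
  | hole, t => t
  | lam x C, t => Tm.lam x (C.plug t)
  | appL C u, t => Tm.app (C.plug t) u
  | appR u C, t => Tm.app u (C.plug t)
  | shift k C, t => Tm.shift k (C.plug t)
  | reset C, t => Tm.reset (C.plug t)

/-- Contextual equivalence for the relaxed semantics. -/
def CtxEquiv (t0 t1 : Tm) : Prop :=
  ∀ C : GCtx, (C.plug t0).Closed → (C.plug t1).Closed →
    ((∃ v, v.IsValue ∧ Evals (C.plug t0) v) ↔ (∃ v, v.IsValue ∧ Evals (C.plug t1) v)) ∧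
    ((∃ s, Stuck s ∧ Evals (C.plug t0) s) ↔ (∃ s, Stuck s ∧ Evals (C.plug t1) s))

/-- Contextual equivalence for the original (top-level reset) semantics. -/
def CtxEquivP (t0 t1 : Tm) : Prop :=
  ∀ C : GCtx, (Tm.reset (C.plug t0)).Closed → (Tm.reset (C.plug t1)).Closed →
    ((∃ v, v.IsValue ∧ Evals (Tm.reset (C.plug t0)) v) ↔
     (∃ v, v.IsValue ∧ Evals (Tm.reset (C.plug t1)) v))

/-- The term-generating closure of a relation R on closed terms. -/
inductive TmClo (R : Tm → Tm → Prop) : Tm → Tm → Prop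
  | base {t t'} : R t t' → TmClo R t t'
  | var (x : ℕ) : TmClo R (Tm.var x) (Tm.var x)
  | lam {t t'} (x : ℕ) : TmClo R t t' → TmClo R (Tm.lam x t) (Tm.lam x t')
  | app {a a' b b'} : TmClo R a a' → TmClo R b b' →
      TmClo R (Tm.app a b) (Tm.app a' b')
  | shift {t t'} (k : ℕ) : TmClo R t t' → TmClo R (Tm.shift k t) (Tm.shift k t')
  | reset {t t'} : TmClo R t t' → TmClo R (Tm.reset t) (Tm.reset t')

/-! Ω reduces only to itself, in any evaluation context, so it never reaches a normal form, while
Sk.Ω is stuck at once: the empty context already separates them in the relaxed semantics.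

Under a top-level reset they cannot be told apart. Relate terms that differ by exchanging
occurrences of Ω and Sk.Ω. A reduction step of one side is matched by a step of the other, unless
it puts Ω in evaluation position: either the redex is Ω itself, or Sk.Ω is captured by a reset and
leaves ⟨Ω⟩ behind. From then on no value is reachable, so one side reaches a value iff the other
does. -/

namespace Ctx

@[simp]
theorem plug_eq_lam_iff {F : Ctx} {r b : Tm} {x : ℕ} :
    F.plug r = Tm.lam x b ↔ F = hole ∧ r = Tm.lam x b := by
  cases F <;> simp [plug]

@[simp]
theorem isValue_plug_iff {F : Ctx} {r : Tm} : (F.plug r).IsValue ↔ F = hole ∧ r.IsValue := by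
  cases F <;> simp [plug, Tm.IsValue]

theorem plug_comp (F G : Ctx) (t : Tm) : (F.comp G).plug t = F.plug (G.plug t) := by
  induction F <;> simp_all [comp, plug]

theorem Wf.comp {F G : Ctx} (hF : F.Wf) (hG : G.Wf) : (F.comp G).Wf := by
  induction F <;> simp_all [Ctx.comp, Wf]

end Ctx

theorem Tm.IsValue.not_red {v u : Tm} (hv : v.IsValue) : ¬ Red v u := by
  rintro (⟨F, x, t, w⟩ | ⟨F, E, k, t⟩ | ⟨F, w⟩) <;> simp_all [Tm.IsValue]

@[simp] theorem not_isRedex_lam (x : ℕ) (t : Tm) : ¬ IsRedex (Tm.lam x t) := by simp [IsRedex]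
@[simp] theorem not_isRedex_shift (k : ℕ) (t : Tm) : ¬ IsRedex (Tm.shift k t) := by simp [IsRedex]

@[simp]
theorem isRedex_app_iff {a b : Tm} :
    IsRedex (Tm.app a b) ↔ (∃ x t, a = Tm.lam x t) ∧ b.IsValue := by
  simp [IsRedex, and_comm]

@[simp]
theorem isRedex_reset_iff {t : Tm} :
    IsRedex (Tm.reset t) ↔
      t.IsValue ∨ ∃ (E : Ctx) (k : ℕ) (s : Tm), E.Wf ∧ E.Pure ∧ t = E.plug (Tm.shift k s) := by
  simp [IsRedex, or_comm]

theorem IsRedex.not_isValue {r : Tm} (h : IsRedex r) : ¬ r.IsValue := by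
  cases r <;> simp_all [Tm.IsValue]

theorem Red.exists_redex {t u : Tm} (h : Red t u) :
    ∃ (F : Ctx) (r : Tm), F.Wf ∧ IsRedex r ∧ t = F.plug r := by
  cases h with
  | beta F x t v hF hv => exact ⟨F, _, hF, Or.inl ⟨x, t, v, hv, rfl⟩, rfl⟩
  | shift F E k t hF hE hP => exact ⟨F, _, hF, Or.inr (Or.inl ⟨E, k, t, hE, hP, rfl⟩), rfl⟩
  | reset F v hF hv => exact ⟨F, _, hF, Or.inr (Or.inr ⟨v, hv, rfl⟩), rfl⟩

theorem Ctx.Pure.plug_shift_ne_plug_redex {E G : Ctx} {k : ℕ} {t s : Tm} (hP : E.Pure)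
    (hE : E.Wf) (hG : G.Wf) (hs : IsRedex s) (h : E.plug (Tm.shift k t) = G.plug s) : False := by
  induction E generalizing G with
  | hole => cases G <;> cases h; simp at hs
  | appR v E ih =>
    cases G <;> simp only [Ctx.plug, Ctx.Wf, Tm.app.injEq, reduceCtorEq] at h hG
    · subst h
      simp [Tm.IsValue] at hs
    · exact ih hP hE.2 hG.2 h.2
    · exact hs.not_isValue (Ctx.isValue_plug_iff.1 (h.1 ▸ hE.1)).2
  | appL E u ih =>
    cases G <;> simp only [Ctx.plug, Ctx.Wf, Tm.app.injEq, reduceCtorEq] at h hG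
    · subst h
      simp at hs
    · simpa [Tm.IsValue] using (Ctx.isValue_plug_iff.1 (h.1 ▸ hG.1)).2
    · exact ih hP hE hG h.1
  | reset => exact hP.elim

theorem IsRedex.eq_hole_of_eq_plug {r s : Tm} {G : Ctx} (hr : IsRedex r) (hs : IsRedex s)
    (hG : G.Wf) (h : r = G.plug s) : G = Ctx.hole := by
  subst h
  cases G with
  | hole => rfl
  | appR v G => simp_all [Ctx.plug, hs.not_isValue]
  | appL G u =>
    obtain ⟨⟨-, x, b, rfl⟩, -⟩ : (G = Ctx.hole ∧ ∃ x b, s = Tm.lam x b) ∧ u.IsValue := by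
      simpa [Ctx.plug] using hr
    simp at hs
  | reset G =>
    simp only [Ctx.plug, Ctx.Wf, isRedex_reset_iff] at hr hG
    rcases hr with hv | ⟨E, k, t, hE, hP, h⟩
    · simp_all [hs.not_isValue]
    · exact (hP.plug_shift_ne_plug_redex hE hG hs h.symm).elim

theorem Ctx.plug_redex_inj {F G : Ctx} {r s : Tm} (hF : F.Wf) (hG : G.Wf) (hr : IsRedex r)
    (hs : IsRedex s) (h : F.plug r = G.plug s) : F = G ∧ r = s := by
  induction F generalizing G with
  | hole =>
    obtain rfl := hr.eq_hole_of_eq_plug hs hG h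
    exact ⟨rfl, h⟩
  | appR v F ih =>
    cases G <;> simp only [Ctx.plug, Ctx.Wf, Tm.app.injEq, reduceCtorEq, appR.injEq] at h hG ⊢
    · exact absurd (hs.eq_hole_of_eq_plug hr hF h.symm) (by simp)
    · exact ⟨⟨h.1, (ih hF.2 hG.2 h.2).1⟩, (ih hF.2 hG.2 h.2).2⟩
    · exact (hs.not_isValue (Ctx.isValue_plug_iff.1 (h.1 ▸ hF.1)).2).elim
  | appL F u ih =>
    cases G <;> simp only [Ctx.plug, Ctx.Wf, Tm.app.injEq, reduceCtorEq, appL.injEq] at h hG ⊢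
    · exact absurd (hs.eq_hole_of_eq_plug hr hF h.symm) (by simp)
    · exact (hr.not_isValue (Ctx.isValue_plug_iff.1 (h.1 ▸ hG.1)).2).elim
    · exact ⟨⟨(ih hF hG h.1).1, h.2⟩, (ih hF hG h.1).2⟩
  | reset F ih =>
    cases G <;> simp only [Ctx.plug, Ctx.Wf, Tm.reset.injEq, reduceCtorEq, reset.injEq] at h hG ⊢
    · exact absurd (hs.eq_hole_of_eq_plug hr hF h.symm) (by simp)
    · exact ih hF hG h

theorem not_red_shift (k : ℕ) (t u : Tm) : ¬ Red (Tm.shift k t) u := fun h => by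
  obtain ⟨F, r, -, hr, h⟩ := h.exists_redex
  cases F <;> cases h
  simp at hr

theorem stuck_shift (k : ℕ) (t : Tm) : Stuck (Tm.shift k t) :=
  ⟨id, not_red_shift k t⟩

theorem fv_omega : Omega.fv = ∅ := by simp [Omega, Tm.fv]

theorem subst_omega (x : ℕ) (v : Tm) : Omega.subst x v = Omega := by
  by_cases hx : 0 = x <;> simp [Omega, Tm.subst, hx]

theorem subst_shift_omega (k x : ℕ) (v : Tm) :
    (Tm.shift k Omega).subst x v = Tm.shift k Omega := by
  simp [Tm.subst, subst_omega]

theorem isRedex_omega : IsRedex Omega := by simp [Omega, Tm.IsValue]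

theorem Ctx.red_plug_omega {F : Ctx} (hF : F.Wf) : Red (F.plug Omega) (F.plug Omega) := by
  simpa [Omega, Tm.subst] using
    Red.beta F 0 (.app (.var 0) (.var 0)) (.lam 0 (.app (.var 0) (.var 0))) hF trivial

theorem Ctx.eq_plug_omega_of_red {F : Ctx} (hF : F.Wf) {u : Tm} (h : Red (F.plug Omega) u) :
    u = F.plug Omega := by
  generalize ht : F.plug Omega = t at h
  cases h with
  | beta G x b v hG hv =>
    obtain ⟨rfl, h⟩ := Ctx.plug_redex_inj hF hG isRedex_omega (by simp [hv]) ht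
    simp only [Omega, Tm.app.injEq, Tm.lam.injEq] at h
    obtain ⟨⟨rfl, rfl⟩, rfl⟩ := h
    simp [Tm.subst]
  | shift G E k t hG hE hP =>
    have := Ctx.plug_redex_inj hF hG isRedex_omega (Or.inr (Or.inl ⟨E, k, t, hE, hP, rfl⟩)) ht
    simp [Omega] at this
  | reset G v hG hv =>
    have := Ctx.plug_redex_inj hF hG isRedex_omega (by simp [hv]) ht
    simp [Omega] at this

theorem Ctx.eq_plug_omega_of_steps {F : Ctx} (hF : F.Wf) {u : Tm}
    (h : Steps (F.plug Omega) u) : u = F.plug Omega := by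
  induction h with
  | refl => rfl
  | tail _ hred ih => exact Ctx.eq_plug_omega_of_red hF (ih ▸ hred)

theorem Ctx.not_steps_plug_omega_value {F : Ctx} (hF : F.Wf) {v : Tm} (hv : v.IsValue) :
    ¬ Steps (F.plug Omega) v := fun h => by
  rw [Ctx.eq_plug_omega_of_steps hF h] at hv
  simp [Omega, Tm.IsValue] at hv

theorem Ctx.not_evals_plug_omega {F : Ctx} (hF : F.Wf) (u : Tm) : ¬ Evals (F.plug Omega) u :=
  fun ⟨h, hirr⟩ => hirr _ (Ctx.eq_plug_omega_of_steps hF h ▸ Ctx.red_plug_omega hF)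

def OmegaRel (k : ℕ) (a b : Tm) : Prop :=
  (a = Omega ∧ b = Tm.shift k Omega) ∨ (a = Tm.shift k Omega ∧ b = Omega)

inductive CtxClo (R : Tm → Tm → Prop) : Ctx → Ctx → Prop
  | hole : CtxClo R .hole .hole
  | appR {v v' : Tm} {F F' : Ctx} : TmClo R v v' → CtxClo R F F' →
      CtxClo R (.appR v F) (.appR v' F')
  | appL {F F' : Ctx} {u u' : Tm} : CtxClo R F F' → TmClo R u u' →
      CtxClo R (.appL F u) (.appL F' u')
  | reset {F F' : Ctx} : CtxClo R F F' → CtxClo R (.reset F) (.reset F')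

namespace CtxClo

variable {R : Tm → Tm → Prop} {F G : Ctx}

theorem plug (h : CtxClo R F G) {r s : Tm} (hrs : TmClo R r s) :
    TmClo R (F.plug r) (G.plug s) := by
  induction h with
  | hole => exact hrs
  | appR hv _ ih => exact .app hv ih
  | appL _ hu ih => exact .app ih hu
  | reset _ ih => exact .reset ih

theorem pure_iff (h : CtxClo R F G) : F.Pure ↔ G.Pure := by
  induction h <;> simp_all [Ctx.Pure]

end CtxClo

namespace OmegaRel

variable {k : ℕ}

theorem tmClo_refl (k : ℕ) (t : Tm) : TmClo (OmegaRel k) t t := by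
  induction t with
  | var x => exact .var x
  | lam x _ ih => exact .lam x ih
  | app _ _ iha ihb => exact .app iha ihb
  | shift x _ ih => exact .shift x ih
  | reset _ ih => exact .reset ih

theorem tmClo_symm {a b : Tm} (h : TmClo (OmegaRel k) a b) : TmClo (OmegaRel k) b a := by
  induction h with
  | base h => exact .base (h.symm.imp And.symm And.symm)
  | var x => exact .var x
  | lam x _ ih => exact .lam x ih
  | app _ _ iha ihb => exact .app iha ihb
  | shift x _ ih => exact .shift x ih
  | reset _ ih => exact .reset ih

theorem tmClo_fv_eq {a b : Tm} (h : TmClo (OmegaRel k) a b) : a.fv = b.fv := by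
  induction h with
  | base h => rcases h with ⟨rfl, rfl⟩ | ⟨rfl, rfl⟩ <;> simp [Tm.fv, fv_omega]
  | _ => simp_all [Tm.fv]

theorem tmClo_isValue_iff {a b : Tm} (h : TmClo (OmegaRel k) a b) :
    a.IsValue ↔ b.IsValue := by
  cases h with
  | base h => rcases h with ⟨rfl, rfl⟩ | ⟨rfl, rfl⟩ <;> simp [Omega, Tm.IsValue]
  | _ => simp [Tm.IsValue]

theorem tmClo_subst {a b v w : Tm} (h : TmClo (OmegaRel k) a b) (hvw : TmClo (OmegaRel k) v w)
    (x : ℕ) : TmClo (OmegaRel k) (a.subst x v) (b.subst x w) := by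
  induction h with
  | base h =>
    rcases id h with ⟨rfl, rfl⟩ | ⟨rfl, rfl⟩ <;>
      simpa only [subst_omega, subst_shift_omega] using TmClo.base h
  | var y => by_cases hy : y = x <;> simp [Tm.subst, hy, hvw, TmClo.var]
  | lam y h ih => by_cases hy : y = x <;> simp [Tm.subst, hy, TmClo.lam, h, ih]
  | app _ _ iha ihb => exact .app iha ihb
  | shift y h ih => by_cases hy : y = x <;> simp [Tm.subst, hy, TmClo.shift, h, ih]
  | reset _ ih => exact .reset ih

theorem ctxClo_wf_iff {F G : Ctx} (h : CtxClo (OmegaRel k) F G) : F.Wf ↔ G.Wf := by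
  induction h with
  | hole => exact Iff.rfl
  | appR hv _ ih => exact and_congr (tmClo_isValue_iff hv) ih
  | appL _ _ ih | reset _ ih => exact ih

theorem ctxClo_fv_eq {F G : Ctx} (h : CtxClo (OmegaRel k) F G) : F.fv = G.fv := by
  induction h with
  | hole => rfl
  | appR hv _ ih => simp only [Ctx.fv, tmClo_fv_eq hv, ih]
  | appL _ hu ih => simp only [Ctx.fv, tmClo_fv_eq hu, ih]
  | reset _ ih => exact ih

theorem tmClo_plug_inv {F : Ctx} {r t : Tm} (hr : ¬ r.IsValue)
    (h : TmClo (OmegaRel k) (F.plug r) t) :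
    ∃ G s, t = G.plug s ∧ CtxClo (OmegaRel k) F G ∧ TmClo (OmegaRel k) r s := by
  induction F generalizing t with
  | hole => exact ⟨.hole, t, rfl, .hole, h⟩
  | appR v F ih =>
    cases h with
    | base h => simp_all [OmegaRel, Omega, Ctx.plug, Tm.IsValue]
    | app hv h =>
      obtain ⟨G, s, rfl, hFG, hrs⟩ := ih h
      exact ⟨.appR _ G, s, rfl, .appR hv hFG, hrs⟩
  | appL F u ih =>
    cases h with
    | base h => simp_all [OmegaRel, Omega, Ctx.plug, Tm.IsValue]
    | app h hu =>
      obtain ⟨G, s, rfl, hFG, hrs⟩ := ih h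
      exact ⟨.appL G _, s, rfl, .appL hFG hu, hrs⟩
  | reset F ih =>
    cases h with
    | base h => simp_all [OmegaRel, Omega, Ctx.plug]
    | reset h =>
      obtain ⟨G, s, rfl, hFG, hrs⟩ := ih h
      exact ⟨.reset G, s, rfl, .reset hFG, hrs⟩

theorem red_simulation_beta {F : Ctx} {x : ℕ} {b v t₁ : Tm} (hF : F.Wf) (hv : v.IsValue)
    (h₀₁ : TmClo (OmegaRel k) (F.plug (.app (.lam x b) v)) t₁) :
    (∃ F' : Ctx, F'.Wf ∧ F.plug (b.subst x v) = F'.plug Omega) ∨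
      ∃ t₁', Red t₁ t₁' ∧ TmClo (OmegaRel k) (F.plug (b.subst x v)) t₁' := by
  obtain ⟨G, s, rfl, hFG, hs⟩ := tmClo_plug_inv (by simp [Tm.IsValue]) h₀₁
  cases hs with
  | base h =>
    -- the redex is Ω itself, which reduces to Ω
    obtain ⟨h, -⟩ : Tm.app (Tm.lam x b) v = Omega ∧ _ := by simpa [OmegaRel] using h
    simp only [Omega, Tm.app.injEq, Tm.lam.injEq] at h
    obtain ⟨⟨rfl, rfl⟩, rfl⟩ := h
    exact .inl ⟨F, hF, by simp [Tm.subst, Omega]⟩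
  | app hlam hv' =>
    cases hlam with
    | base h => simp [OmegaRel, Omega] at h
    | lam x hb =>
      exact .inr ⟨_, .beta G x _ _ ((ctxClo_wf_iff hFG).1 hF) ((tmClo_isValue_iff hv').1 hv),
        hFG.plug (tmClo_subst hb hv' x)⟩

theorem red_simulation_shift {F E : Ctx} {k' : ℕ} {s t₁ : Tm} (hF : F.Wf) (hE : E.Wf)
    (hP : E.Pure) (h₀₁ : TmClo (OmegaRel k) (F.plug (.reset (E.plug (.shift k' s)))) t₁) :
    let t₀' :=
      F.plug (.reset (s.subst k' (.lam (fresh E.fv) (.reset (E.plug (.var (fresh E.fv)))))))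
    (∃ F' : Ctx, F'.Wf ∧ t₀' = F'.plug Omega) ∨
      ∃ t₁', Red t₁ t₁' ∧ TmClo (OmegaRel k) t₀' t₁' := by
  obtain ⟨G, s₁, rfl, hFG, hs⟩ := tmClo_plug_inv (by simp [Tm.IsValue]) h₀₁
  cases hs with
  | base h => simp [OmegaRel, Omega] at h
  | reset hE₀ =>
    obtain ⟨E₁, s₂, rfl, hEE, hshift⟩ := tmClo_plug_inv (by simp [Tm.IsValue]) hE₀
    cases hshift with
    | base h =>
      -- Sk.Ω captures its context and leaves ⟨Ω⟩ in evaluation position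
      obtain ⟨⟨rfl, rfl⟩, -⟩ : (k' = k ∧ s = Omega) ∧ _ := by simpa [OmegaRel, Omega] using h
      exact .inl ⟨F.comp (.reset .hole), hF.comp trivial,
        by simp [Ctx.plug_comp, Ctx.plug, subst_omega]⟩
    | shift k' hs =>
      have hk : TmClo (OmegaRel k)
          (.lam (fresh E.fv) (.reset (E.plug (.var (fresh E.fv)))))
          (.lam (fresh E₁.fv) (.reset (E₁.plug (.var (fresh E₁.fv))))) := by
        rw [← ctxClo_fv_eq hEE]
        exact .lam _ (.reset (hEE.plug (.var _)))
      exact .inr ⟨_, .shift G E₁ k' _ ((ctxClo_wf_iff hFG).1 hF) ((ctxClo_wf_iff hEE).1 hE)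
        (hEE.pure_iff.1 hP), hFG.plug (.reset (tmClo_subst hs hk k'))⟩

theorem red_simulation_reset {F : Ctx} {v t₁ : Tm} (hF : F.Wf) (hv : v.IsValue)
    (h₀₁ : TmClo (OmegaRel k) (F.plug (.reset v)) t₁) :
    ∃ t₁', Red t₁ t₁' ∧ TmClo (OmegaRel k) (F.plug v) t₁' := by
  obtain ⟨G, s, rfl, hFG, hs⟩ := tmClo_plug_inv (by simp [Tm.IsValue]) h₀₁
  cases hs with
  | base h => simp [OmegaRel, Omega] at h
  | reset hs =>
    exact ⟨_, .reset G _ ((ctxClo_wf_iff hFG).1 hF) ((tmClo_isValue_iff hs).1 hv), hFG.plug hs⟩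

theorem red_simulation {t₀ t₀' t₁ : Tm} (h : Red t₀ t₀') (h₀₁ : TmClo (OmegaRel k) t₀ t₁) :
    (∃ F : Ctx, F.Wf ∧ t₀' = F.plug Omega) ∨
      ∃ t₁', Red t₁ t₁' ∧ TmClo (OmegaRel k) t₀' t₁' := by
  cases h with
  | beta F x b v hF hv => exact red_simulation_beta hF hv h₀₁
  | shift F E k' s hF hE hP => exact red_simulation_shift hF hE hP h₀₁
  | reset F v hF hv => exact .inr (red_simulation_reset hF hv h₀₁)

theorem exists_steps_value {t₀ t₁ v : Tm} (h : Steps t₀ v) (hv : v.IsValue)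
    (h₀₁ : TmClo (OmegaRel k) t₀ t₁) : ∃ w, w.IsValue ∧ Steps t₁ w := by
  induction h using Relation.ReflTransGen.head_induction_on generalizing t₁ with
  | refl => exact ⟨t₁, (tmClo_isValue_iff h₀₁).1 hv, .refl⟩
  | head hred hsteps ih =>
    rcases red_simulation hred h₀₁ with ⟨F, hF, rfl⟩ | ⟨t₁', hred₁, h₀₁'⟩
    · exact (Ctx.not_steps_plug_omega_value hF hv hsteps).elim
    · obtain ⟨w, hw, hsteps₁⟩ := ih h₀₁'
      exact ⟨w, hw, .head hred₁ hsteps₁⟩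

theorem exists_evals_value {t₀ t₁ : Tm} (h₀₁ : TmClo (OmegaRel k) t₀ t₁) :
    (∃ v, v.IsValue ∧ Evals t₀ v) → ∃ v, v.IsValue ∧ Evals t₁ v := by
  rintro ⟨v, hv, hsteps, -⟩
  obtain ⟨w, hw, hsteps₁⟩ := exists_steps_value hsteps hv h₀₁
  exact ⟨w, hw, hsteps₁, fun _ => hw.not_red⟩

theorem tmClo_gCtx_plug (k : ℕ) (C : GCtx) :
    TmClo (OmegaRel k) (C.plug Omega) (C.plug (Tm.shift k Omega)) := by
  induction C with
  | hole => exact .base (.inl ⟨rfl, rfl⟩)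
  | lam x _ ih => exact .lam x ih
  | appL _ u ih => exact .app ih (tmClo_refl k u)
  | appR u _ ih => exact .app (tmClo_refl k u) ih
  | shift x _ ih => exact .shift x ih
  | reset _ ih => exact .reset ih

end OmegaRel

/-- Ω and Sk.Ω are not equivalent under the relaxed semantics
    (Ω diverges, Sk.Ω is a stuck normal form), but are equivalent under the
    original semantics, so the inclusion ≃ ⊆ ≃_p is strict. -/
theorem omega_not_ctxEquiv_shift_omega (k : ℕ) :
    Diverges Omega ∧ Stuck (Tm.shift k Omega) ∧
    ¬ CtxEquiv Omega (Tm.shift k Omega) ∧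
    CtxEquivP Omega (Tm.shift k Omega) := by
  have hΩ : Red Omega Omega := Ctx.red_plug_omega (F := .hole) trivial
  refine ⟨⟨fun _ => Omega, rfl, fun _ => hΩ⟩, stuck_shift k Omega, fun h => ?_, fun C _ _ => ?_⟩
  · have hstuck : ∃ s, Stuck s ∧ Evals (Tm.shift k Omega) s :=
      ⟨_, stuck_shift k Omega, .refl, (stuck_shift k Omega).2⟩
    obtain ⟨s, -, hs⟩ := ((h .hole (by simp [Tm.Closed, GCtx.plug, fv_omega])
      (by simp [Tm.Closed, GCtx.plug, Tm.fv, fv_omega])).2).2 hstuck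
    exact Ctx.not_evals_plug_omega (F := .hole) trivial s hs
  · have h₀₁ := TmClo.reset (OmegaRel.tmClo_gCtx_plug k C)
    exact ⟨OmegaRel.exists_evals_value h₀₁, OmegaRel.exists_evals_value (OmegaRel.tmClo_symm h₀₁)⟩
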